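/- The stationary distribution of the deficiency zero network in the paper is the product-form Poisson distribution: pi(x1,x2,x3,x4) = exp(-sum_i c_i) prod_i c_i^{x_i}/x_i!, with c1 = theta1/theta2, c2 = theta3/theta4, c3 = theta1 theta3 theta7 / (theta2 theta4 theta8), c4 = theta3^2 theta5 / (theta4^2 theta6), satisfies Q^T pi = 0 where Q is the transition rate matrix of the network with the eight mass-action reactions. -/

import Mathlib

/-!
The Poisson weights `w_c(n) = cⁿ / n!` satisfy `(n + 1) w_c(n + 1) = c w_c(n)`. Hence, for the
product weight `π(x) ∝ ∏ w_{cᵢ}(xᵢ)`, the mass-action propensity `θ (x + y)^{(y)}` of a reaction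
with source complex `y` and rate constant `θ`, multiplied by `π(x + y)`, equals `θ cʸ π(x)`.
The means `cᵢ` make `c` a detailed-balanced equilibrium of the deterministic system
(`θ₁ = θ₂c₁`, `θ₃ = θ₄c₂`, `θ₅c₂² = θ₆c₄`, `θ₇c₁c₂ = θ₈c₃`), so every reversible pair is in detailed
balance for `π`: at each state the inflow through a reaction equals the outflow through its
reverse, also on the boundary, where both vanish. Summing over the eight reactions gives `Qᵀπ = 0`.
-/

open Nat

theorem cast_succ_mul_pow_div_factorial_succ {K : Type*} [Field K] [CharZero K] (c : K) (n : ℕ) :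
    ((n + 1 : ℕ) : K) * (c ^ (n + 1) / (n + 1)!) = c * (c ^ n / n !) := by
  rw [factorial_succ, pow_succ]
  push_cast
  field_simp

theorem ite_one_le_eq {M : Type*} [Zero M] {f g : ℕ → M} (h0 : g 0 = 0)
    (hs : ∀ n, f n = g (n + 1)) (n : ℕ) : (if 1 ≤ n then f (n - 1) else 0) = g n := by
  cases n with
  | zero => simp [h0]
  | succ n => simp [hs]

theorem ite_two_le_eq {M : Type*} [Zero M] {f g : ℕ → M} (h0 : g 0 = 0) (h1 : g 1 = 0)
    (hs : ∀ n, f n = g (n + 2)) (n : ℕ) : (if 2 ≤ n then f (n - 2) else 0) = g n := by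
  match n with
  | 0 => simp [h0]
  | 1 => simp [h1]
  | n + 2 => simp [hs]

theorem ite_one_le_and_one_le_eq {M : Type*} [Zero M] {f g : ℕ → ℕ → M}
    (h0 : ∀ b, g 0 b = 0) (h0' : ∀ a, g a 0 = 0) (hs : ∀ a b, f a b = g (a + 1) (b + 1))
    (a b : ℕ) : (if 1 ≤ a ∧ 1 ≤ b then f (a - 1) (b - 1) else 0) = g a b := by
  match a, b with
  | 0, b => simp [h0]
  | a + 1, 0 => simp [h0']
  | a + 1, b + 1 => simp [hs]

namespace DeficiencyZeroNetwork

variable {π : ℕ → ℕ → ℕ → ℕ → ℝ} {C c1 c2 c3 c4 : ℝ}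

def IsProductPoisson (π : ℕ → ℕ → ℕ → ℕ → ℝ) (C c1 c2 c3 c4 : ℝ) : Prop :=
  ∀ x1 x2 x3 x4 : ℕ, π x1 x2 x3 x4 = C
    * (c1 ^ x1 / x1 !) * (c2 ^ x2 / x2 !) * (c3 ^ x3 / x3 !) * (c4 ^ x4 / x4 !)

theorem IsProductPoisson.succ_mul_succ_x1 (hπ : IsProductPoisson π C c1 c2 c3 c4)
    (a b c d : ℕ) : ((a + 1 : ℕ) : ℝ) * π (a + 1) b c d = c1 * π a b c d := by
  rw [hπ, hπ]
  linear_combination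
    C * (c2 ^ b / b !) * (c3 ^ c / c !) * (c4 ^ d / d !) * cast_succ_mul_pow_div_factorial_succ c1 a

theorem IsProductPoisson.succ_mul_succ_x2 (hπ : IsProductPoisson π C c1 c2 c3 c4)
    (a b c d : ℕ) : ((b + 1 : ℕ) : ℝ) * π a (b + 1) c d = c2 * π a b c d := by
  rw [hπ, hπ]
  linear_combination
    C * (c1 ^ a / a !) * (c3 ^ c / c !) * (c4 ^ d / d !) * cast_succ_mul_pow_div_factorial_succ c2 b

theorem IsProductPoisson.succ_mul_succ_x3 (hπ : IsProductPoisson π C c1 c2 c3 c4)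
    (a b c d : ℕ) : ((c + 1 : ℕ) : ℝ) * π a b (c + 1) d = c3 * π a b c d := by
  rw [hπ, hπ]
  linear_combination
    C * (c1 ^ a / a !) * (c2 ^ b / b !) * (c4 ^ d / d !) * cast_succ_mul_pow_div_factorial_succ c3 c

theorem IsProductPoisson.succ_mul_succ_x4 (hπ : IsProductPoisson π C c1 c2 c3 c4)
    (a b c d : ℕ) : ((d + 1 : ℕ) : ℝ) * π a b c (d + 1) = c4 * π a b c d := by
  rw [hπ, hπ]
  linear_combination
    C * (c1 ^ a / a !) * (c2 ^ b / b !) * (c3 ^ c / c !) * cast_succ_mul_pow_div_factorial_succ c4 d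

theorem IsProductPoisson.detailed_balance_r1_r2 (hπ : IsProductPoisson π C c1 c2 c3 c4)
    {θ1 θ2 : ℝ} (h : θ1 = θ2 * c1)
    (a b c d : ℕ) :
    θ2 * (a + 1 : ℕ) * π (a + 1) b c d = θ1 * π a b c d := by
  linear_combination θ2 * hπ.succ_mul_succ_x1 a b c d - π a b c d * h

theorem IsProductPoisson.detailed_balance_r3_r4 (hπ : IsProductPoisson π C c1 c2 c3 c4)
    {θ3 θ4 : ℝ} (h : θ3 = θ4 * c2)
    (a b c d : ℕ) :
    θ4 * (b + 1 : ℕ) * π a (b + 1) c d = θ3 * π a b c d := by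
  linear_combination θ4 * hπ.succ_mul_succ_x2 a b c d - π a b c d * h

theorem IsProductPoisson.detailed_balance_r5_r6 (hπ : IsProductPoisson π C c1 c2 c3 c4)
    {θ5 θ6 : ℝ} (h : θ5 * c2 ^ 2 = θ6 * c4)
    (a b c d : ℕ) :
    θ5 * ((b + 2 : ℕ) * (b + 1 : ℕ)) * π a (b + 2) c d = θ6 * (d + 1 : ℕ) * π a b c (d + 1) := by
  linear_combination θ5 * (b + 1 : ℕ) * hπ.succ_mul_succ_x2 a (b + 1) c d
    + θ5 * c2 * hπ.succ_mul_succ_x2 a b c d - θ6 * hπ.succ_mul_succ_x4 a b c d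
    + π a b c d * h

theorem IsProductPoisson.detailed_balance_r7_r8 (hπ : IsProductPoisson π C c1 c2 c3 c4)
    {θ7 θ8 : ℝ} (h : θ7 * (c1 * c2) = θ8 * c3)
    (a b c d : ℕ) :
    θ7 * ((a + 1 : ℕ) * (b + 1 : ℕ)) * π (a + 1) (b + 1) c d
      = θ8 * (c + 1 : ℕ) * π a b (c + 1) d := by
  linear_combination θ7 * (a + 1 : ℕ) * hπ.succ_mul_succ_x2 (a + 1) b c d
    + θ7 * c2 * hπ.succ_mul_succ_x1 a b c d - θ8 * hπ.succ_mul_succ_x3 a b c d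
    + π a b c d * h

theorem IsProductPoisson.inflow_r1_eq_outflow_r2 (hπ : IsProductPoisson π C c1 c2 c3 c4)
    {θ1 θ2 : ℝ} (h : θ1 = θ2 * c1) (x1 x2 x3 x4 : ℕ) :
    (if 1 ≤ x1 then θ1 * π (x1 - 1) x2 x3 x4 else 0) = θ2 * x1 * π x1 x2 x3 x4 :=
  ite_one_le_eq (f := fun n ↦ θ1 * π n x2 x3 x4) (g := fun n ↦ θ2 * n * π n x2 x3 x4) (by simp)
    (fun n ↦ (hπ.detailed_balance_r1_r2 h n x2 x3 x4).symm) x1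

theorem IsProductPoisson.inflow_r3_eq_outflow_r4 (hπ : IsProductPoisson π C c1 c2 c3 c4)
    {θ3 θ4 : ℝ} (h : θ3 = θ4 * c2) (x1 x2 x3 x4 : ℕ) :
    (if 1 ≤ x2 then θ3 * π x1 (x2 - 1) x3 x4 else 0) = θ4 * x2 * π x1 x2 x3 x4 :=
  ite_one_le_eq (f := fun n ↦ θ3 * π x1 n x3 x4) (g := fun n ↦ θ4 * n * π x1 n x3 x4) (by simp)
    (fun n ↦ (hπ.detailed_balance_r3_r4 h x1 n x3 x4).symm) x2

theorem IsProductPoisson.inflow_r5_eq_outflow_r6 (hπ : IsProductPoisson π C c1 c2 c3 c4)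
    {θ5 θ6 : ℝ} (h : θ5 * c2 ^ 2 = θ6 * c4) (x1 x2 x3 x4 : ℕ) :
    (if 1 ≤ x4 then θ5 * ((x2 + 2 : ℕ) * (x2 + 1 : ℕ)) * π x1 (x2 + 2) x3 (x4 - 1) else 0)
      = θ6 * x4 * π x1 x2 x3 x4 :=
  ite_one_le_eq (f := fun n ↦ θ5 * ((x2 + 2 : ℕ) * (x2 + 1 : ℕ)) * π x1 (x2 + 2) x3 n)
    (g := fun n ↦ θ6 * n * π x1 x2 x3 n) (by simp) (hπ.detailed_balance_r5_r6 h x1 x2 x3) x4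

theorem IsProductPoisson.inflow_r6_eq_outflow_r5 (hπ : IsProductPoisson π C c1 c2 c3 c4)
    {θ5 θ6 : ℝ} (h : θ5 * c2 ^ 2 = θ6 * c4) (x1 x2 x3 x4 : ℕ) :
    (if 2 ≤ x2 then θ6 * (x4 + 1 : ℕ) * π x1 (x2 - 2) x3 (x4 + 1) else 0)
      = θ5 * (x2 * (x2 - 1) : ℕ) * π x1 x2 x3 x4 :=
  ite_two_le_eq (f := fun n ↦ θ6 * (x4 + 1 : ℕ) * π x1 n x3 (x4 + 1))
    (g := fun n ↦ θ5 * (n * (n - 1) : ℕ) * π x1 n x3 x4) (by simp) (by simp) (fun n ↦ by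
      rw [← hπ.detailed_balance_r5_r6 h, Nat.add_sub_assoc one_le_two, Nat.cast_mul]
      rfl) x2

theorem IsProductPoisson.inflow_r7_eq_outflow_r8 (hπ : IsProductPoisson π C c1 c2 c3 c4)
    {θ7 θ8 : ℝ} (h : θ7 * (c1 * c2) = θ8 * c3) (x1 x2 x3 x4 : ℕ) :
    (if 1 ≤ x3 then θ7 * ((x1 + 1 : ℕ) * (x2 + 1 : ℕ)) * π (x1 + 1) (x2 + 1) (x3 - 1) x4 else 0)
      = θ8 * x3 * π x1 x2 x3 x4 :=
  ite_one_le_eq (f := fun n ↦ θ7 * ((x1 + 1 : ℕ) * (x2 + 1 : ℕ)) * π (x1 + 1) (x2 + 1) n x4)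
    (g := fun n ↦ θ8 * n * π x1 x2 n x4) (by simp) (hπ.detailed_balance_r7_r8 h x1 x2 · x4) x3

theorem IsProductPoisson.inflow_r8_eq_outflow_r7 (hπ : IsProductPoisson π C c1 c2 c3 c4)
    {θ7 θ8 : ℝ} (h : θ7 * (c1 * c2) = θ8 * c3) (x1 x2 x3 x4 : ℕ) :
    (if 1 ≤ x1 ∧ 1 ≤ x2 then θ8 * (x3 + 1 : ℕ) * π (x1 - 1) (x2 - 1) (x3 + 1) x4 else 0)
      = θ7 * (x1 * x2 : ℕ) * π x1 x2 x3 x4 :=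
  ite_one_le_and_one_le_eq (f := fun a b ↦ θ8 * (x3 + 1 : ℕ) * π a b (x3 + 1) x4)
    (g := fun a b ↦ θ7 * (a * b : ℕ) * π a b x3 x4) (by simp) (by simp) (fun a b ↦ by
      rw [← hπ.detailed_balance_r7_r8 h, Nat.cast_mul]) x1 x2

end DeficiencyZeroNetwork

theorem deficiency_zero_product_form_stationary_general
    (θ1 θ2 θ3 θ4 θ5 θ6 θ7 θ8 : ℝ)
    (h2 : 0 < θ2) (h4 : 0 < θ4) (h6 : 0 < θ6) (h8 : 0 < θ8)
    (c1 c2 c3 c4 : ℝ)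
    (hc1 : c1 = θ1 / θ2) (hc2 : c2 = θ3 / θ4)
    (hc3 : c3 = θ1 * θ3 * θ7 / (θ2 * θ4 * θ8))
    (hc4 : c4 = θ3 ^ 2 * θ5 / (θ4 ^ 2 * θ6))
    (π : ℕ → ℕ → ℕ → ℕ → ℝ)
    (hπ : ∀ x1 x2 x3 x4 : ℕ,
      π x1 x2 x3 x4 = Real.exp (-(c1 + c2 + c3 + c4))
        * (c1 ^ x1 / (Nat.factorial x1)) * (c2 ^ x2 / (Nat.factorial x2))
        * (c3 ^ x3 / (Nat.factorial x3)) * (c4 ^ x4 / (Nat.factorial x4))) :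
    ∀ x1 x2 x3 x4 : ℕ,
      -- inflow from reaction 1: ∅ → S1
      ((if 1 ≤ x1 then θ1 * π (x1 - 1) x2 x3 x4 else 0)
      -- inflow from reaction 2: S1 → ∅
        + θ2 * (x1 + 1 : ℕ) * π (x1 + 1) x2 x3 x4
      -- inflow from reaction 3: ∅ → S2
        + (if 1 ≤ x2 then θ3 * π x1 (x2 - 1) x3 x4 else 0)
      -- inflow from reaction 4: S2 → ∅
        + θ4 * (x2 + 1 : ℕ) * π x1 (x2 + 1) x3 x4
      -- inflow from reaction 5: 2S2 → S4
        + (if 1 ≤ x4 then θ5 * ((x2 + 2 : ℕ) * (x2 + 1 : ℕ))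
            * π x1 (x2 + 2) x3 (x4 - 1) else 0)
      -- inflow from reaction 6: S4 → 2S2
        + (if 2 ≤ x2 then θ6 * (x4 + 1 : ℕ) * π x1 (x2 - 2) x3 (x4 + 1) else 0)
      -- inflow from reaction 7: S1 + S2 → S3
        + (if 1 ≤ x3 then θ7 * ((x1 + 1 : ℕ) * (x2 + 1 : ℕ))
            * π (x1 + 1) (x2 + 1) (x3 - 1) x4 else 0)
      -- inflow from reaction 8: S3 → S1 + S2
        + (if 1 ≤ x1 ∧ 1 ≤ x2 then θ8 * (x3 + 1 : ℕ)
            * π (x1 - 1) (x2 - 1) (x3 + 1) x4 else 0))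
      -- total outflow
      = (θ1 + θ2 * x1 + θ3 + θ4 * x2 + θ5 * (x2 * (x2 - 1) : ℕ)
          + θ6 * x4 + θ7 * (x1 * x2 : ℕ) + θ8 * x3) * π x1 x2 x3 x4 := by
  have e1 : θ1 = θ2 * c1 := by rw [hc1]; field_simp
  have e2 : θ3 = θ4 * c2 := by rw [hc2]; field_simp
  have e3 : θ5 * c2 ^ 2 = θ6 * c4 := by rw [hc2, hc4]; field_simp
  have e4 : θ7 * (c1 * c2) = θ8 * c3 := by rw [hc1, hc2, hc3]; field_simp
  have hπ : DeficiencyZeroNetwork.IsProductPoisson π _ c1 c2 c3 c4 := hπ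
  intro x1 x2 x3 x4
  rw [hπ.inflow_r1_eq_outflow_r2 e1, hπ.detailed_balance_r1_r2 e1,
    hπ.inflow_r3_eq_outflow_r4 e2, hπ.detailed_balance_r3_r4 e2,
    hπ.inflow_r5_eq_outflow_r6 e3, hπ.inflow_r6_eq_outflow_r5 e3,
    hπ.inflow_r7_eq_outflow_r8 e4, hπ.inflow_r8_eq_outflow_r7 e4]
  ring

/-- The product-form Poisson distribution with means
`c1 = θ1/θ2`, `c2 = θ3/θ4`, `c3 = θ1θ3θ7/(θ2θ4θ8)`, `c4 = θ3²θ5/(θ4²θ6)`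
is stationary for the deficiency zero network with the eight mass-action
reactions of the paper: for every state `x ∈ ℕ⁴`, the total probability inflow
equals the total outflow (`Qᵀ π = 0`). -/
theorem deficiency_zero_product_form_stationary
    (θ1 θ2 θ3 θ4 θ5 θ6 θ7 θ8 : ℝ)
    (h1 : 0 < θ1) (h2 : 0 < θ2) (h3 : 0 < θ3) (h4 : 0 < θ4)
    (h5 : 0 < θ5) (h6 : 0 < θ6) (h7 : 0 < θ7) (h8 : 0 < θ8)
    (c1 c2 c3 c4 : ℝ)
    (hc1 : c1 = θ1 / θ2) (hc2 : c2 = θ3 / θ4)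
    (hc3 : c3 = θ1 * θ3 * θ7 / (θ2 * θ4 * θ8))
    (hc4 : c4 = θ3 ^ 2 * θ5 / (θ4 ^ 2 * θ6))
    (π : ℕ → ℕ → ℕ → ℕ → ℝ)
    (hπ : ∀ x1 x2 x3 x4 : ℕ,
      π x1 x2 x3 x4 = Real.exp (-(c1 + c2 + c3 + c4))
        * (c1 ^ x1 / (Nat.factorial x1)) * (c2 ^ x2 / (Nat.factorial x2))
        * (c3 ^ x3 / (Nat.factorial x3)) * (c4 ^ x4 / (Nat.factorial x4))) :
    ∀ x1 x2 x3 x4 : ℕ,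
      -- inflow from reaction 1: ∅ → S1
      ((if 1 ≤ x1 then θ1 * π (x1 - 1) x2 x3 x4 else 0)
      -- inflow from reaction 2: S1 → ∅
        + θ2 * (x1 + 1 : ℕ) * π (x1 + 1) x2 x3 x4
      -- inflow from reaction 3: ∅ → S2
        + (if 1 ≤ x2 then θ3 * π x1 (x2 - 1) x3 x4 else 0)
      -- inflow from reaction 4: S2 → ∅
        + θ4 * (x2 + 1 : ℕ) * π x1 (x2 + 1) x3 x4
      -- inflow from reaction 5: 2S2 → S4
        + (if 1 ≤ x4 then θ5 * ((x2 + 2 : ℕ) * (x2 + 1 : ℕ))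
            * π x1 (x2 + 2) x3 (x4 - 1) else 0)
      -- inflow from reaction 6: S4 → 2S2
        + (if 2 ≤ x2 then θ6 * (x4 + 1 : ℕ) * π x1 (x2 - 2) x3 (x4 + 1) else 0)
      -- inflow from reaction 7: S1 + S2 → S3
        + (if 1 ≤ x3 then θ7 * ((x1 + 1 : ℕ) * (x2 + 1 : ℕ))
            * π (x1 + 1) (x2 + 1) (x3 - 1) x4 else 0)
      -- inflow from reaction 8: S3 → S1 + S2
        + (if 1 ≤ x1 ∧ 1 ≤ x2 then θ8 * (x3 + 1 : ℕ)
            * π (x1 - 1) (x2 - 1) (x3 + 1) x4 else 0))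
      -- total outflow
      = (θ1 + θ2 * x1 + θ3 + θ4 * x2 + θ5 * (x2 * (x2 - 1) : ℕ)
          + θ6 * x4 + θ7 * (x1 * x2 : ℕ) + θ8 * x3) * π x1 x2 x3 x4 :=
  deficiency_zero_product_form_stationary_general θ1 θ2 θ3 θ4 θ5 θ6 θ7 θ8 h2 h4 h6 h8 c1 c2 c3 c4
    hc1 hc2 hc3 hc4 π hπ
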